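/- For any integer n ≥ 4 with n ≡ 0 (mod 4), the equidistant dimension of the prism graph C_n □ K_2 equals n. -/

import Mathlib

/-!
At most one of the two vertices `(i, 0)`, `(i, 1)` of a rung can lie outside a distance-equalizer
set, since their distances to any vertex differ by exactly one; hence `ξ ≥ n`.

Conversely take `D = {(k, k mod 2)}`. As `n` is even, the cycle distance `d(i, k)` has the parity of
`i + k`, so from a vertex `(i, a) ∉ D` the distance to `(k, k mod 2)` is `d(i, k)` rounded up to the
next odd number, `2 ⌊d(i, k) / 2⌋ + 1`. It remains to find, for any `i, j`, a vertex `k` with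
`⌊d(i, k) / 2⌋ = ⌊d(j, k) / 2⌋`: the midpoint of the short arc between `i` and `j` works unless its
length is `3 mod 4`, and then, since `4 ∣ n`, the long arc has length `1 mod 4` and its midpoint works.
-/

open SimpleGraph

def IsDistEqSet {V : Type*} (G : SimpleGraph V) (D : Set V) : Prop :=
  ∀ x ∉ D, ∀ y ∉ D, ∃ w ∈ D, G.dist x w = G.dist y w

noncomputable def eqdim {V : Type*} [Fintype V] (G : SimpleGraph V) : ℕ :=
  sInf {k | ∃ D : Finset V, IsDistEqSet G (D : Set V) ∧ D.card = k}

lemma Fin.exists_min_val_div_two_eq {n : ℕ} [NeZero n] (hn : 4 ∣ n) (t : Fin n) :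
    ∃ s : Fin n, min s.val (n - s.val) / 2 = min (s - t).val (n - (s - t).val) / 2 := by
  obtain ⟨m, rfl⟩ := hn
  -- the midpoint of the arc from `0` to `t` of length `≢ 3 mod 4`
  obtain ⟨s, hs⟩ : ∃ s : Fin (4 * m),
      s.val = if t.val % 4 = 3 then t.val + (4 * m - t.val - 1) / 2 else t.val / 2 :=
    ⟨⟨if t.val % 4 = 3 then t.val + (4 * m - t.val - 1) / 2 else t.val / 2,
      by split_ifs <;> omega⟩, rfl⟩
  refine ⟨s, ?_⟩
  have hst := Fin.val_add_eq_ite (s - t) t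
  rw [sub_add_cancel] at hst
  have := (s - t).isLt
  split_ifs at hs hst <;> omega

namespace SimpleGraph

variable {V W : Type*} {G : SimpleGraph V} {H : SimpleGraph W}

lemma Reachable.dist_boxProd {x y : V × W} (hG : G.Reachable x.1 y.1)
    (hH : H.Reachable x.2 y.2) :
    (G □ H).dist x y = G.dist x.1 y.1 + H.dist x.2 y.2 := by
  rw [dist, dist, dist, edist_boxProd,
    ENat.toNat_add (edist_ne_top_iff_reachable.mpr hG) (edist_ne_top_iff_reachable.mpr hH)]

lemma dist_eq_of_forall_adj (f : V → ℕ) {v : V} (hzero : ∀ x, f x = 0 ↔ x = v)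
    (hle : ∀ x y, G.Adj x y → f x ≤ f y + 1)
    (hdesc : ∀ x, f x ≠ 0 → ∃ y, G.Adj x y ∧ f y + 1 = f x) (u : V) :
    G.dist u v = f u := by
  have hwalk : ∀ (k : ℕ) (x : V), f x = k → ∃ p : G.Walk x v, p.length = k := by
    intro k
    induction k with
    | zero => rintro x hx; obtain rfl := (hzero x).mp hx; exact ⟨.nil, rfl⟩
    | succ k ih =>
      intro x hx
      obtain ⟨y, hxy, hy⟩ := hdesc x (by omega)
      obtain ⟨p, hp⟩ := ih y (by omega)
      exact ⟨.cons hxy p, by simp [hp]⟩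
  have hlength : ∀ {x y : V} (p : G.Walk x y), f x ≤ p.length + f y := by
    intro x y p
    induction p with
    | nil => simp
    | cons hxy p ih => have := hle _ _ hxy; simp only [Walk.length_cons]; omega
  obtain ⟨p, hp⟩ := hwalk (f u) u rfl
  obtain ⟨q, hq⟩ := p.reachable.exists_walk_length_eq_dist
  exact le_antisymm (hp ▸ dist_le p) (by simpa [hq, (hzero v).mpr rfl] using hlength q)

lemma cycleGraph_dist {n : ℕ} [NeZero n] (i j : Fin n) :
    (cycleGraph n).dist i j = min (j - i).val (n - (j - i).val) := by
  refine dist_eq_of_forall_adj (fun x => min (j - x).val (n - (j - x).val)) ?_ ?_ ?_ i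
  · intro x
    have := (j - x).isLt
    rw [eq_comm (a := x), ← sub_eq_zero (a := j), ← Fin.val_eq_zero_iff]
    omega
  · intro x y hxy
    have := (j - x).isLt; have := (j - y).isLt
    rcases cycleGraph_adj'.mp hxy with h | h
    · have := Fin.val_add_eq_ite (j - x) (x - y)
      rw [sub_add_sub_cancel] at this
      split_ifs at this <;> omega
    · have := Fin.val_add_eq_ite (j - y) (y - x)
      rw [sub_add_sub_cancel] at this
      split_ifs at this <;> omega
  · intro x hx
    have := (j - x).isLt
    have h1 : (1 : Fin n).val = 1 := by rw [Fin.val_one']; exact Nat.mod_eq_of_lt (by omega)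
    by_cases ht : (j - x).val ≤ n - (j - x).val
    · refine ⟨x + 1, cycleGraph_adj'.mpr (Or.inr (by rwa [add_sub_cancel_left])), ?_⟩
      have := Fin.val_add_eq_ite (j - (x + 1)) 1
      rw [show j - (x + 1) + 1 = j - x by abel] at this
      split_ifs at this <;> omega
    · refine ⟨x - 1, cycleGraph_adj'.mpr (Or.inl (by rwa [sub_sub_cancel])), ?_⟩
      have := Fin.val_add_eq_ite (j - x) 1
      rw [show j - x + 1 = j - (x - 1) by abel] at this
      split_ifs at this <;> omega

lemma cycleGraph_dist_mod_two {n : ℕ} [NeZero n] (hn : Even n) (i j : Fin n) :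
    (cycleGraph n).dist i j % 2 = (i.val + j.val) % 2 := by
  rw [cycleGraph_dist]
  have := Fin.val_add_eq_ite (j - i) i
  rw [sub_add_cancel] at this
  obtain ⟨m, rfl⟩ := hn
  split_ifs at this <;> omega

lemma exists_cycleGraph_dist_div_two_eq {n : ℕ} [NeZero n] (hn : 4 ∣ n) (i j : Fin n) :
    ∃ k, (cycleGraph n).dist i k / 2 = (cycleGraph n).dist j k / 2 := by
  obtain ⟨s, hs⟩ := Fin.exists_min_val_div_two_eq hn (j - i)
  refine ⟨i + s, ?_⟩
  rwa [cycleGraph_dist, cycleGraph_dist, add_sub_cancel_left,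
    show i + s - j = s - (j - i) by abel]

lemma dist_cycleGraph_boxProd_top_of_ne {n : ℕ} [NeZero n] (hn : Even n) {i : Fin n}
    {a : Fin 2} (ha : a ≠ Fin.ofNat 2 i) (k : Fin n) :
    (cycleGraph n □ ⊤).dist (i, a) (k, Fin.ofNat 2 k) = 2 * ((cycleGraph n).dist i k / 2) + 1 := by
  have hai : a.val ≠ i.val % 2 := by simpa [Fin.ext_iff] using ha
  have hak : a = Fin.ofNat 2 k ↔ a.val = k.val % 2 := by simp [Fin.ext_iff]
  have hpar := cycleGraph_dist_mod_two hn i k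
  have := a.isLt
  rw [Reachable.dist_boxProd (cycleGraph_preconnected _ _) (connected_top.preconnected _ _),
    dist_top]
  simp only [hak]
  split_ifs <;> omega

end SimpleGraph

lemma IsDistEqSet.mem_or_mem_of_boxProd_top {V : Type*} {G : SimpleGraph V} (hG : G.Preconnected)
    {D : Set (V × Fin 2)} (hD : IsDistEqSet (G □ ⊤) D) (v : V) : (v, 0) ∈ D ∨ (v, 1) ∈ D := by
  by_contra! h
  obtain ⟨⟨w, b⟩, -, hw⟩ := hD _ h.1 _ h.2
  rw [Reachable.dist_boxProd (hG _ _) (connected_top.preconnected _ _),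
    Reachable.dist_boxProd (hG _ _) (connected_top.preconnected _ _), dist_top, dist_top] at hw
  fin_cases b <;> simp at hw

lemma IsDistEqSet.card_le_of_boxProd_top {V : Type*} [Fintype V] {G : SimpleGraph V}
    (hG : G.Preconnected) {D : Finset (V × Fin 2)}
    (hD : IsDistEqSet (G □ ⊤) (D : Set (V × Fin 2))) : Fintype.card V ≤ D.card := by
  refine Finset.card_univ (α := V) ▸ Finset.card_le_card_of_surjOn Prod.fst fun v _ => ?_
  rcases hD.mem_or_mem_of_boxProd_top hG v with h | h
  exacts [⟨_, h, rfl⟩, ⟨_, h, rfl⟩]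

lemma isDistEqSet_cycleGraph_boxProd_top {n : ℕ} (hn : 4 ∣ n) :
    IsDistEqSet (cycleGraph n □ ⊤) (Set.range fun k : Fin n => (k, Fin.ofNat 2 k)) := by
  rintro ⟨i, a⟩ hx ⟨j, b⟩ hy
  have : NeZero n := ⟨i.pos.ne'⟩
  have heven : Even n := even_iff_two_dvd.mpr ((by norm_num : 2 ∣ 4).trans hn)
  have hoff : ∀ {i : Fin n} {a : Fin 2},
      (i, a) ∉ Set.range (fun k : Fin n => (k, Fin.ofNat 2 k)) → a ≠ Fin.ofNat 2 i :=
    fun {i _} hx ha => hx ⟨i, by rw [ha]⟩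
  obtain ⟨k, hk⟩ := exists_cycleGraph_dist_div_two_eq hn i j
  refine ⟨(k, Fin.ofNat 2 k), ⟨k, rfl⟩, ?_⟩
  rw [dist_cycleGraph_boxProd_top_of_ne heven (hoff hx),
    dist_cycleGraph_boxProd_top_of_ne heven (hoff hy), hk]

lemma eqdim_eq {V : Type*} [Fintype V] {G : SimpleGraph V} {k : ℕ} (D : Finset V)
    (hD : IsDistEqSet G (D : Set V)) (hcard : D.card = k)
    (hmin : ∀ D' : Finset V, IsDistEqSet G (D' : Set V) → k ≤ D'.card) : eqdim G = k :=
  le_antisymm (Nat.sInf_le ⟨D, hD, hcard⟩)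
    (le_csInf ⟨k, D, hD, hcard⟩ fun _ ⟨D', hD', h⟩ => h ▸ hmin D' hD')

theorem stmt_12_general (n : ℕ) (h4 : n % 4 = 0) :
    eqdim (cycleGraph n □ (⊤ : SimpleGraph (Fin 2))) = n := by
  let D : Finset (Fin n × Fin 2) :=
    Finset.univ.map ⟨fun k => (k, Fin.ofNat 2 k), fun _ _ h => (Prod.ext_iff.mp h).1⟩
  refine eqdim_eq D ?_ (by simp [D]) fun D' hD' => ?_
  · simpa [D, Set.image_univ] using
      isDistEqSet_cycleGraph_boxProd_top (Nat.dvd_of_mod_eq_zero h4)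
  · simpa using hD'.card_le_of_boxProd_top cycleGraph_preconnected

theorem stmt_12 (n : ℕ) (hn : 4 ≤ n) (h4 : n % 4 = 0) :
    eqdim (cycleGraph n □ (⊤ : SimpleGraph (Fin 2))) = n :=
  stmt_12_general n h4
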